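/- Let X be an almost meshed continuum and f : X → X a continuous map. If the set Per(2^f) of periodic points of the induced map 2^f is dense in the hyperspace 2^X, then Per(f) is dense in X. -/

import Mathlib

open Set Topology Filter TopologicalSpace

/-- A dendrite: a nondegenerate continuum in which any two distinct points can be
separated by a third point. -/
def IsDendrite (X : Type*) [TopologicalSpace X] : Prop :=
  Nontrivial X ∧ ∀ x y : X, x ≠ y → ∃ z : X, z ≠ x ∧ z ≠ y ∧
    connectedComponentIn ({z}ᶜ : Set X) x ≠ connectedComponentIn ({z}ᶜ : Set X) y

/-- `p` is an endpoint of `X` if `X \ {p}` is connected. -/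
def IsEndpointOf (X : Type*) [TopologicalSpace X] (p : X) : Prop :=
  IsPreconnected ({p}ᶜ : Set X)

/-- A periodic point of `f`. -/
def IsPeriodic {X : Type*} (f : X → X) (x : X) : Prop :=
  ∃ n : ℕ, 1 ≤ n ∧ f^[n] x = x

/-- `x` has dense forward orbit under `f`. -/
def HasDenseOrbit {X : Type*} [TopologicalSpace X] (f : X → X) (x : X) : Prop :=
  Dense {y : X | ∃ n : ℕ, 1 ≤ n ∧ f^[n] x = y}

/-- Topological transitivity. -/
def TopTransitive {X : Type*} [TopologicalSpace X] (f : X → X) : Prop :=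
  ∀ U V : Set X, IsOpen U → IsOpen V → U.Nonempty → V.Nonempty →
    ∃ n : ℕ, 0 < n ∧ (f^[n] '' U ∩ V).Nonempty

/-- Total transitivity: every iterate is transitive. -/
def TotallyTransitive {X : Type*} [TopologicalSpace X] (f : X → X) : Prop :=
  ∀ n : ℕ, 1 ≤ n → TopTransitive (f^[n])

/-- Weak mixing: `f × f` is transitive. -/
def WeaklyMixing {X : Type*} [TopologicalSpace X] (f : X → X) : Prop :=
  TopTransitive (Prod.map f f)

/-- Topological mixing. -/
def TopMixing {X : Type*} [TopologicalSpace X] (f : X → X) : Prop :=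
  ∀ U V : Set X, IsOpen U → IsOpen V → U.Nonempty → V.Nonempty →
    ∃ N : ℕ, ∀ n, N ≤ n → (f^[n] '' U ∩ V).Nonempty

/-- Exactness. -/
def TopExact {X : Type*} [TopologicalSpace X] (f : X → X) : Prop :=
  ∀ U : Set X, IsOpen U → U.Nonempty → ∃ N : ℕ, 0 < N ∧ f^[N] '' U = Set.univ

/-- `A` is an arc with endpoints `a` and `b`. -/
def IsArcEnds {X : Type*} [TopologicalSpace X] (A : Set X) (a b : X) : Prop :=
  ∃ e : (Set.Icc (0:ℝ) 1) ≃ₜ A,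
    (e ⟨0, by norm_num⟩ : X) = a ∧ (e ⟨1, by norm_num⟩ : X) = b

/-- `A` is a free arc with endpoints `a` and `b`. -/
def IsFreeArc {X : Type*} [TopologicalSpace X] (A : Set X) (a b : X) : Prop :=
  IsArcEnds A a b ∧ IsOpen (A \ {a, b})

/-- A regular periodic decomposition of length `m` for `f`. -/
def IsRegPerDecomp {X : Type*} [TopologicalSpace X] (f : X → X) (m : ℕ)
    (Ds : ZMod m → Set X) : Prop :=
  0 < m ∧ (∀ i, Ds i = closure (interior (Ds i))) ∧ (⋃ i, Ds i) = Set.univ ∧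
    (∀ i, f '' Ds i = Ds (i + 1)) ∧ (∀ i j, i ≠ j → IsNowhereDense (Ds i ∩ Ds j))

/-- `f` admits a terminal (maximal-length) regular periodic decomposition. -/
def HasTerminalDecomp {X : Type*} [TopologicalSpace X] (f : X → X) : Prop :=
  ∃ (m : ℕ) (Ds : ZMod m → Set X), IsRegPerDecomp f m Ds ∧
    ∀ (m' : ℕ) (Ds' : ZMod m' → Set X), IsRegPerDecomp f m' Ds' → m' ≤ m

/-- The induced map on the hyperspace of nonempty closed (= compact) subsets. -/
def hyperMap {X : Type*} [TopologicalSpace X] {f : X → X} (hf : Continuous f) :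
    NonemptyCompacts X → NonemptyCompacts X :=
  fun A => ⟨⟨f '' A, A.isCompact.image hf⟩, A.nonempty.image f⟩

/-- The set of connected components of `X \ {p}`. -/
def componentsAt (X : Type*) [TopologicalSpace X] (p : X) : Set (Set X) :=
  {C | ∃ x : X, x ≠ p ∧ C = connectedComponentIn ({p}ᶜ : Set X) x}

/-!
Suppose an open set `U` contains no periodic point of `f`. It meets the interior of a free arc,
and collapsing the complement of the open arc to a point gives a continuous map `X → S¹` that is
injective over the open arc. Approximating singletons by periodic points of `2^f` produces four
closed sets along a subarc `J ⊆ U`, all mapped into themselves by one iterate `F = f^N`. Between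
the largest parameter of one such set and the smallest of the next, `F` first moves points
backwards and then forwards; without fixed points its displacement lifts continuously to
`(0, 1)`, so the gap between the first two sets `F`-covers the gap between the last two, which in
turn covers the first gap after one turn around the circle. The intermediate value theorem then
gives a point of `J` of period `2` for `F`.
-/

open Function

theorem AddCircle.eq_of_coe_eq_of_abs_sub_lt_one {a b : ℝ}
    (h : (a : AddCircle (1 : ℝ)) = b) (hab : |a - b| < 1) : a = b := by
  obtain ⟨n, hn⟩ := (AddCircle.coe_eq_zero_iff (1 : ℝ) (x := a - b)).1
    (by rw [AddCircle.coe_sub, h, sub_self])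
  rw [zsmul_one] at hn
  have : n = 0 := Int.abs_lt_one_iff.1 (by exact_mod_cast hn ▸ hab)
  rw [this, Int.cast_zero] at hn
  linarith

theorem AddCircle.exists_lift_sub_mem_Ioo {s : Set ℝ} {g : ℝ → AddCircle (1 : ℝ)}
    (hg : ContinuousOn g s) (hne : ∀ τ ∈ s, g τ ≠ τ) :
    ∃ R : ℝ → ℝ, ContinuousOn R s ∧ ∀ τ ∈ s, g τ = R τ ∧ R τ - τ ∈ Ioo 0 1 := by
  set d : ℝ → ℝ := fun τ => AddCircle.equivIoc (1 : ℝ) 0 (g τ - (τ : AddCircle (1 : ℝ)))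
  have hd : ∀ τ, ((d τ : ℝ) : AddCircle (1 : ℝ)) = g τ - τ := fun τ =>
    (AddCircle.equivIoc (1 : ℝ) 0).symm_apply_apply _
  have hsub : ∀ τ ∈ s, g τ - τ ≠ ((0 : ℝ) : AddCircle (1 : ℝ)) := fun τ hτ h =>
    hne τ hτ (by simpa [sub_eq_zero] using h)
  refine ⟨fun τ => τ + d τ, continuousOn_id.add fun τ hτ => ?_, fun τ hτ => ⟨?_, ?_⟩⟩
  · have hcoe : Continuous (fun τ : ℝ => (τ : AddCircle (1 : ℝ))) := AddCircle.continuous_mk' 1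
    have hdiff : ContinuousWithinAt (fun τ => g τ - (τ : AddCircle (1 : ℝ))) s τ :=
      (hg τ hτ).sub hcoe.continuousWithinAt
    have hlift : ContinuousAt (fun x => (AddCircle.equivIoc (1 : ℝ) 0 x : ℝ)) (g τ - τ) :=
      continuous_subtype_val.continuousAt.comp (AddCircle.continuousAt_equivIoc 1 0 (hsub τ hτ))
    exact ContinuousAt.comp_continuousWithinAt
      (f := fun τ => g τ - (τ : AddCircle (1 : ℝ))) hlift hdiff
  · rw [AddCircle.coe_add, hd, add_sub_cancel]
  · have hmem : d τ ∈ Ioc (0 : ℝ) (0 + 1) := (AddCircle.equivIoc (1 : ℝ) 0 _).2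
    rw [zero_add] at hmem
    rw [add_sub_cancel_left]
    refine ⟨hmem.1, hmem.2.lt_of_ne fun h1 => hsub τ hτ ?_⟩
    rw [← hd, h1, AddCircle.coe_period, AddCircle.coe_zero]

theorem exists_mem_Icc_comp_eq_of_crossing {R R' : ℝ → ℝ} {a b c d : ℝ} (hab : a ≤ b)
    (hcd : c ≤ d) (hR : ContinuousOn R (Icc a b)) (hR' : ContinuousOn R' (Icc c d))
    (ha : d < R a) (hb : R b < c) (hc : b < R' c) (hd : R' d < a) :
    ∃ τ ∈ Icc a b, R τ ∈ Icc c d ∧ R' (R τ) = τ := by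
  -- Clamping `R` into `[c, d]` makes the composite defined on all of `[a, b]`; at a fixed point of
  -- the clamped composite the clamp turns out to be inactive.
  set clamp : ℝ → ℝ := fun x => max c (min d x)
  have hclamp : ∀ x, clamp x ∈ Icc c d := fun x =>
    ⟨le_max_left _ _, max_le hcd (min_le_left _ _)⟩
  have hclamp_of_le : ∀ x, x ≤ c → clamp x = c := fun x hx => by
    simp only [clamp]; rw [min_eq_right (hx.trans hcd), max_eq_left hx]
  have hclamp_of_ge : ∀ x, d ≤ x → clamp x = d := fun x hx => by
    simp only [clamp]; rw [min_eq_left hx, max_eq_right hcd]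
  have hcont : ContinuousOn (fun τ => R' (clamp (R τ)) - τ) (Icc a b) :=
    (hR'.comp ((continuous_const.max (continuous_const.min continuous_id)).comp_continuousOn hR)
      fun τ _ => hclamp _).sub continuousOn_id
  have h0 : (0 : ℝ) ∈ Icc (R' (clamp (R a)) - a) (R' (clamp (R b)) - b) := by
    rw [hclamp_of_ge _ ha.le, hclamp_of_le _ hb.le]
    constructor <;> linarith
  obtain ⟨τ, hτ, hfix⟩ := intermediate_value_Icc hab hcont h0
  rw [sub_eq_zero] at hfix
  have hmem : R τ ∈ Icc c d := by
    by_contra hout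
    rcases not_and_or.1 hout with hlt | hgt
    · rw [hclamp_of_le _ (not_le.1 hlt).le] at hfix; linarith [hτ.2]
    · rw [hclamp_of_ge _ (not_le.1 hgt).le] at hfix; linarith [hτ.1]
  refine ⟨τ, hτ, hmem, ?_⟩
  rwa [show clamp (R τ) = R τ by
    simp only [clamp]; rw [min_eq_right hmem.2, max_eq_right hmem.1]] at hfix

theorem IsArcEnds.exists_coordinate {X : Type*} [TopologicalSpace X] [NormalSpace X]
    [T2Space X] {A : Set X} {a b : X} (h : IsArcEnds A a b) :
    ∃ (Φ : X → ℝ) (γ : ℝ → X), Continuous Φ ∧ Continuous γ ∧ γ '' Icc 0 1 = A ∧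
      LeftInvOn Φ γ (Icc 0 1) ∧ γ 0 = a ∧ γ 1 = b := by
  obtain ⟨e, he0, he1⟩ := h
  have hA : IsClosed A := by
    have : range (fun t => (e t : X)) = A := by
      rw [range_comp' Subtype.val e, e.surjective.range_eq, image_univ, Subtype.range_coe]
    exact this ▸ (isCompact_range (continuous_subtype_val.comp e.continuous)).isClosed
  obtain ⟨Φ, hΦ⟩ := ContinuousMap.exists_restrict_eq hA ⟨fun x => (e.symm x : ℝ), by fun_prop⟩
  have hΦA : ∀ x (hx : x ∈ A), Φ x = e.symm ⟨x, hx⟩ := fun x hx =>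
    DFunLike.congr_fun hΦ ⟨x, hx⟩
  refine ⟨Φ, fun τ => e (projIcc 0 1 zero_le_one τ), Φ.continuous, by fun_prop, ?_,
    fun τ hτ => ?_, ?_, ?_⟩
  · refine (image_subset_iff.2 fun τ _ => (e _).2).antisymm fun x hx => ?_
    exact ⟨e.symm ⟨x, hx⟩, (e.symm _).2, by simp only [projIcc_val, e.apply_symm_apply]⟩
  · rw [hΦA _ (e _).2, Subtype.coe_eta, e.symm_apply_apply, projIcc_of_mem _ hτ]
  · simpa only [projIcc_left] using he0
  · simpa only [projIcc_right] using he1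

/-- A map to the circle whose fibres over the open arc `(0, 1)` are single points, traced out by
`param`. Collapsing the complement of a free arc to a point gives one. -/
structure CircleChart (X : Type*) [TopologicalSpace X] where
  proj : X → AddCircle (1 : ℝ)
  param : ℝ → X
  continuous_proj : Continuous proj
  continuous_param : Continuous param
  proj_param : ∀ τ ∈ Ioo (0 : ℝ) 1, proj (param τ) = τ
  eq_param_of_proj_eq : ∀ x, ∀ τ ∈ Ioo (0 : ℝ) 1, proj x = τ → x = param τ

theorem IsFreeArc.exists_circleChart {X : Type*} [TopologicalSpace X] [NormalSpace X]
    [T2Space X] {A : Set X} {a b : X} (h : IsFreeArc A a b) :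
    ∃ c : CircleChart X, A ⊆ c.param '' Icc 0 1 := by
  classical
  obtain ⟨Φ, γ, hΦ, hγ, hγA, hΦγ, hγ0, hγ1⟩ := h.1.exists_coordinate
  set O := A \ {a, b}
  have hO : IsOpen O := h.2
  have hA : IsClosed A := hγA ▸ (isCompact_Icc.image hγ).isClosed
  have hΦa : Φ a = 0 := hγ0 ▸ hΦγ (left_mem_Icc.2 zero_le_one)
  have hΦb : Φ b = 1 := hγ1 ▸ hΦγ (right_mem_Icc.2 zero_le_one)
  have hγO : ∀ τ ∈ Ioo (0 : ℝ) 1, γ τ ∈ O := by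
    refine fun τ hτ => ⟨hγA ▸ mem_image_of_mem γ (Ioo_subset_Icc_self hτ), ?_⟩
    rintro (h | h) <;> have := hΦγ (Ioo_subset_Icc_self hτ)
    · rw [h, hΦa] at this; exact hτ.1.ne this
    · rw [h, hΦb] at this; exact hτ.2.ne' this
  have hΦO : ∀ x ∈ O, Φ x ∈ Ico (0 : ℝ) (0 + 1) ∧ γ (Φ x) = x := by
    intro x hx
    obtain ⟨τ, hτ, rfl⟩ := hγA.symm ▸ hx.1
    rw [hΦγ hτ, zero_add]
    refine ⟨⟨hτ.1, hτ.2.lt_of_ne ?_⟩, rfl⟩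
    rintro rfl
    exact hx.2 (Or.inr hγ1)
  refine ⟨⟨O.piecewise (fun x => (Φ x : AddCircle (1 : ℝ))) fun _ => 0, γ, ?_, hγ,
    fun τ hτ => ?_, fun x τ hτ hx => ?_⟩, hγA.symm.subset⟩
  · refine Continuous.piecewise (fun x hx => ?_) (AddCircle.continuous_mk' 1 |>.comp hΦ)
      continuous_const
    rw [hO.frontier_eq] at hx
    have hxab : x = a ∨ x = b := by
      by_contra hne
      exact hx.2 ⟨closure_minimal sdiff_subset hA hx.1, hne⟩
    rcases hxab with rfl | rfl
    · simp [hΦa]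
    · simp [hΦb]
  · rw [piecewise_eq_of_mem _ _ _ (hγO τ hτ), hΦγ (Ioo_subset_Icc_self hτ)]
  · have hτ' : τ ∈ Ico (0 : ℝ) (0 + 1) := by rw [zero_add]; exact Ioo_subset_Ico_self hτ
    by_cases hxO : x ∈ O
    · rw [piecewise_eq_of_mem _ _ _ hxO,
        AddCircle.coe_eq_coe_iff_of_mem_Ico (hΦO x hxO).1 hτ'] at hx
      rw [← hx, (hΦO x hxO).2]
    · rw [piecewise_eq_of_notMem _ _ _ hxO, ← AddCircle.coe_zero,
        AddCircle.coe_eq_coe_iff_of_mem_Ico (by simp) hτ'] at hx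
      exact absurd hx.symm hτ.1.ne'

namespace CircleChart

variable {X : Type*} [TopologicalSpace X] (c : CircleChart X)

theorem isOpen_image_Ioo {u v : ℝ} (hu : 0 ≤ u) (hv : v ≤ 1) : IsOpen (c.param '' Ioo u v) := by
  have hsub : Ioo u v ⊆ Ioo 0 1 := Ioo_subset_Ioo hu hv
  have : c.param '' Ioo u v = c.proj ⁻¹' ((↑) '' Ioo u v) := by
    ext x
    constructor
    · rintro ⟨τ, hτ, rfl⟩
      exact ⟨τ, hτ, (c.proj_param τ (hsub hτ)).symm⟩
    · rintro ⟨τ, hτ, hx⟩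
      exact ⟨τ, hτ, (c.eq_param_of_proj_eq x τ (hsub hτ) hx.symm).symm⟩
  rw [this]
  exact (QuotientAddGroup.isOpenMap_coe _ isOpen_Ioo).preimage c.continuous_proj

def HasInvariantSetIn (F : X → X) (u v : ℝ) : Prop :=
  ∃ B : Set X, IsClosed B ∧ B.Nonempty ∧ B ⊆ c.param '' Icc u v ∧ MapsTo F B B

variable {c} {F : X → X} {u v : ℝ}

theorem HasInvariantSetIn.iterate (h : c.HasInvariantSetIn F u v) (n : ℕ) :
    c.HasInvariantSetIn F^[n] u v :=
  let ⟨B, hB, hBne, hBsub, hFB⟩ := h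
  ⟨B, hB, hBne, hBsub, hFB.iterate n⟩

theorem HasInvariantSetIn.le (h : c.HasInvariantSetIn F u v) : u ≤ v := by
  obtain ⟨B, -, ⟨x, hx⟩, hBsub, -⟩ := h
  obtain ⟨τ, hτ, -⟩ := hBsub hx
  exact hτ.1.trans hτ.2

theorem HasInvariantSetIn.exists_param_set (h : c.HasInvariantSetIn F u v) :
    ∃ K : Set ℝ, IsCompact K ∧ K.Nonempty ∧ K ⊆ Icc u v ∧
      ∀ μ ∈ K, ∃ ξ ∈ K, F (c.param μ) = c.param ξ := by
  obtain ⟨B, hB, ⟨x, hx⟩, hBsub, hFB⟩ := h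
  refine ⟨Icc u v ∩ c.param ⁻¹' B, isCompact_Icc.inter_right (hB.preimage c.continuous_param),
    ?_, inter_subset_left, fun μ hμ => ?_⟩
  · obtain ⟨τ, hτ, rfl⟩ := hBsub hx
    exact ⟨τ, hτ, hx⟩
  · obtain ⟨ξ, hξ, hξμ⟩ := hBsub (hFB hμ.2)
    exact ⟨ξ, ⟨hξ, by rw [mem_preimage, hξμ]; exact hFB hμ.2⟩, hξμ.symm⟩

theorem HasInvariantSetIn.exists_isGreatest (h : c.HasInvariantSetIn F u v) :
    ∃ μ ∈ Icc u v, ∃ ξ ∈ Icc u μ, F (c.param μ) = c.param ξ := by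
  obtain ⟨K, hK, hKne, hKsub, hFK⟩ := h.exists_param_set
  obtain ⟨μ, hμ, hμmax⟩ := hK.exists_isGreatest hKne
  obtain ⟨ξ, hξ, hξμ⟩ := hFK μ hμ
  exact ⟨μ, hKsub hμ, ξ, ⟨(hKsub hξ).1, hμmax hξ⟩, hξμ⟩

theorem HasInvariantSetIn.exists_isLeast (h : c.HasInvariantSetIn F u v) :
    ∃ ν ∈ Icc u v, ∃ ζ ∈ Icc ν v, F (c.param ν) = c.param ζ := by
  obtain ⟨K, hK, hKne, hKsub, hFK⟩ := h.exists_param_set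
  obtain ⟨ν, hν, hνmin⟩ := hK.exists_isLeast hKne
  obtain ⟨ζ, hζ, hζν⟩ := hFK ν hν
  exact ⟨ν, hKsub hν, ζ, ⟨hνmin hζ, (hKsub hζ).2⟩, hζν⟩

theorem exists_lift_crossing (hF : Continuous F) {u v w : ℝ} (h₁ : c.HasInvariantSetIn F u v)
    (h₂ : c.HasInvariantSetIn F v w) (hu : 0 < u) (hw : w < 1)
    (hfix : ∀ τ ∈ Icc u w, F (c.param τ) ≠ c.param τ) :
    ∃ (μ ν : ℝ) (R : ℝ → ℝ), u ≤ μ ∧ μ ≤ ν ∧ ν ≤ w ∧ ContinuousOn R (Icc μ ν) ∧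
      (∀ τ ∈ Icc μ ν, c.proj (F (c.param τ)) = R τ) ∧ u + 1 ≤ R μ ∧ R ν ≤ w := by
  obtain ⟨μ, hμ, ξ, hξ, hFμ⟩ := h₁.exists_isGreatest
  obtain ⟨ν, hν, ζ, hζ, hFν⟩ := h₂.exists_isLeast
  have hμν : μ ≤ ν := hμ.2.trans hν.1
  have hsub : Icc μ ν ⊆ Icc u w := Icc_subset_Icc hμ.1 hν.2
  have hmem : ∀ τ ∈ Icc u w, τ ∈ Ioo (0 : ℝ) 1 := fun τ hτ =>
    ⟨hu.trans_le hτ.1, hτ.2.trans_lt hw⟩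
  have hg : Continuous fun τ => c.proj (F (c.param τ)) :=
    c.continuous_proj.comp (hF.comp c.continuous_param)
  obtain ⟨R, hR, hgR⟩ := AddCircle.exists_lift_sub_mem_Ioo hg.continuousOn fun τ hτ h =>
    hfix τ (hsub hτ) (c.eq_param_of_proj_eq _ τ (hmem τ (hsub hτ)) h)
  obtain ⟨hRμ, hRμ'⟩ := hgR μ (left_mem_Icc.2 hμν)
  obtain ⟨hRν, hRν'⟩ := hgR ν (right_mem_Icc.2 hμν)
  rw [hFμ, c.proj_param ξ (hmem ξ ⟨hξ.1, hξ.2.trans (hμ.2.trans h₂.le)⟩)] at hRμ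
  rw [hFν, c.proj_param ζ (hmem ζ ⟨hμ.1.trans (hμν.trans hζ.1), hζ.2⟩)] at hRν
  have hξR : R μ = ξ + 1 := by
    refine AddCircle.eq_of_coe_eq_of_abs_sub_lt_one ?_ (abs_lt.2 ⟨?_, ?_⟩)
    · rw [← hRμ, AddCircle.coe_add, AddCircle.coe_period, add_zero]
    · linarith [hRμ'.1, hξ.2]
    · linarith [hRμ'.2, hξ.1, hμν, hν.2]
  have hζR : R ν = ζ := by
    refine AddCircle.eq_of_coe_eq_of_abs_sub_lt_one hRν.symm (abs_lt.2 ⟨?_, ?_⟩)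
    · linarith [hRν'.1, hζ.2, hμ.1]
    · linarith [hRν'.2, hζ.1]
  exact ⟨μ, ν, R, hμ.1, hμν, hν.2, hR, fun τ hτ => (hgR τ hτ).1, by linarith [hξ.1],
    by linarith [hζ.2]⟩

theorem exists_isPeriodicPt_two (hF : Continuous F) {a₀ a₁ a₂ b₀ b₁ b₂ : ℝ}
    (ha : c.HasInvariantSetIn F a₀ a₁) (ha' : c.HasInvariantSetIn F a₁ a₂)
    (hb : c.HasInvariantSetIn F b₀ b₁) (hb' : c.HasInvariantSetIn F b₁ b₂)
    (h₀ : 0 < a₀) (hab : a₂ < b₀) (h₁ : b₂ < 1)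
    (hfix : ∀ τ ∈ Icc a₀ b₂, F (c.param τ) ≠ c.param τ) :
    ∃ τ ∈ Icc a₀ a₂, IsPeriodicPt F 2 (c.param τ) := by
  have ha₂ : a₂ ≤ b₂ := hab.le.trans (hb.le.trans hb'.le)
  have hb₀ : a₀ ≤ b₀ := (ha.le.trans ha'.le).trans hab.le
  obtain ⟨μ, ν, R, hμ, hμν, hν, hR, hgR, hRμ, hRν⟩ := c.exists_lift_crossing hF ha ha'
    h₀ (ha₂.trans_lt h₁) fun τ hτ => hfix τ ⟨hτ.1, hτ.2.trans ha₂⟩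
  obtain ⟨μ', ν', R', hμ', hμν', hν', hR', hgR', hRμ', hRν'⟩ := c.exists_lift_crossing hF hb hb'
    (h₀.trans_le hb₀) h₁ fun τ hτ => hfix τ ⟨hb₀.trans hτ.1, hτ.2⟩
  obtain ⟨τ, hτ, hRτ, hRR⟩ := exists_mem_Icc_comp_eq_of_crossing (R' := fun σ => R' σ - 1) hμν
    hμν' hR (hR'.sub continuousOn_const) (by linarith) (by linarith) (by linarith)
    (by linarith)
  have hτ01 : τ ∈ Ioo (0 : ℝ) 1 := ⟨by linarith [hτ.1], by linarith [hτ.2]⟩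
  have hRτ01 : R τ ∈ Ioo (0 : ℝ) 1 := ⟨by linarith [hRτ.1], by linarith [hRτ.2]⟩
  have hstep₁ : F (c.param τ) = c.param (R τ) := c.eq_param_of_proj_eq _ _ hRτ01 (hgR τ hτ)
  have hstep₂ : F (c.param (R τ)) = c.param τ := by
    refine c.eq_param_of_proj_eq _ _ hτ01 ?_
    rw [hgR' _ hRτ, show R' (R τ) = τ + 1 by linarith, AddCircle.coe_add, AddCircle.coe_period,
      add_zero]
  exact ⟨τ, ⟨hμ.trans hτ.1, hτ.2.trans hν⟩, by
    rw [IsPeriodicPt, IsFixedPt, iterate_succ_apply, iterate_one, hstep₁, hstep₂]⟩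

theorem exists_mem_periodicPts {f : X → X} (hf : Continuous f) {s t : ℝ} (hs : 0 < s)
    (hst : s < t) (ht : t < 1)
    (hinv : ∀ u v, s ≤ u → u < v → v ≤ t → ∃ n, 0 < n ∧ c.HasInvariantSetIn f^[n] u v) :
    ∃ τ ∈ Icc s t, c.param τ ∈ periodicPts f := by
  obtain ⟨w, hw, rfl⟩ : ∃ w, 0 < w ∧ t = s + 5 * w := ⟨(t - s) / 5, by linarith, by ring⟩
  obtain ⟨n₁, hn₁, h₁⟩ := hinv s (s + w) le_rfl (by linarith) (by linarith)
  obtain ⟨n₂, hn₂, h₂⟩ := hinv (s + w) (s + 2 * w) (by linarith) (by linarith) (by linarith)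
  obtain ⟨n₃, hn₃, h₃⟩ := hinv (s + 3 * w) (s + 4 * w) (by linarith) (by linarith) (by linarith)
  obtain ⟨n₄, hn₄, h₄⟩ := hinv (s + 4 * w) (s + 5 * w) (by linarith) (by linarith) le_rfl
  set N := n₁ * n₂ * n₃ * n₄
  have hN : 0 < N := by positivity
  have hcommon : ∀ {n u v}, c.HasInvariantSetIn f^[n] u v → n ∣ N →
      c.HasInvariantSetIn f^[N] u v := by
    rintro n u v h ⟨k, hk⟩
    rw [hk, iterate_mul]
    exact h.iterate k
  by_contra! hnone
  obtain ⟨τ, hτ, hper⟩ := c.exists_isPeriodicPt_two (hf.iterate N)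
    (hcommon h₁ ⟨n₂ * n₃ * n₄, by ring⟩) (hcommon h₂ ⟨n₁ * n₃ * n₄, by ring⟩)
    (hcommon h₃ ⟨n₁ * n₂ * n₄, by ring⟩) (hcommon h₄ ⟨n₁ * n₂ * n₃, by ring⟩) hs
    (by linarith) ht fun τ hτ hfix => hnone τ hτ (mk_mem_periodicPts hN hfix)
  refine hnone τ ⟨hτ.1, hτ.2.trans (by linarith)⟩
    (mk_mem_periodicPts (by positivity : 0 < N * 2) ?_)
  rwa [IsPeriodicPt, iterate_mul]

end CircleChart

theorem IsOpen.exists_Icc_subset_of_inter_Icc_nonempty {W : Set ℝ} (hW : IsOpen W)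
    (hne : (W ∩ Icc 0 1).Nonempty) :
    ∃ s t : ℝ, 0 < s ∧ s < t ∧ t < 1 ∧ Icc s t ⊆ W := by
  obtain ⟨τ, hτW, hτ⟩ := hne
  rw [← closure_Ioo zero_ne_one] at hτ
  obtain ⟨a, b, hab, hsub⟩ :=
    (hW.inter isOpen_Ioo).exists_Ioo_subset (mem_closure_iff.1 hτ W hW hτW)
  have hIcc : Icc ((2 * a + b) / 3) ((a + 2 * b) / 3) ⊆ Ioo a b := fun x hx =>
    ⟨by linarith [hx.1], by linarith [hx.2]⟩
  have hs := hsub (hIcc ⟨le_rfl, by linarith⟩)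
  have ht := hsub (hIcc ⟨by linarith, le_rfl⟩)
  exact ⟨_, _, hs.2.1, by linarith, ht.2.2, fun x hx => (hsub (hIcc hx)).1⟩

theorem coe_hyperMap_iterate {X : Type*} [TopologicalSpace X] {f : X → X} (hf : Continuous f)
    (n : ℕ) (A : NonemptyCompacts X) : ((hyperMap hf)^[n] A : Set X) = f^[n] '' A := by
  have : Semiconj (fun A : NonemptyCompacts X => (A : Set X)) (hyperMap hf) (image f) :=
    fun _ => rfl
  rw [image_iterate_eq]
  exact this.iterate_right n A

theorem exists_mapsTo_iterate_of_dense_periodic_hyperMap {X : Type*} [MetricSpace X]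
    {f : X → X} (hf : Continuous f)
    (hper : Dense {A : NonemptyCompacts X | IsPeriodic (hyperMap hf) A}) {V : Set X} (hV : IsOpen V) (hVne : V.Nonempty) :
    ∃ n, 0 < n ∧ ∃ B : Set X, IsClosed B ∧ B.Nonempty ∧ B ⊆ V ∧ MapsTo f^[n] B B := by
  obtain ⟨x, hx⟩ := hVne
  obtain ⟨r, hr, hball⟩ := Metric.isOpen_iff.1 hV x hx
  obtain ⟨A, ⟨n, hn, hA⟩, hdist⟩ :=
    hper.exists_dist_lt (⟨⟨{x}, isCompact_singleton⟩, singleton_nonempty x⟩ :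
      NonemptyCompacts X) hr
  refine ⟨n, hn, A, A.isCompact.isClosed, A.nonempty, fun z hz => hball ?_, ?_⟩
  · rw [Metric.mem_ball, ← Metric.infDist_singleton]
    calc Metric.infDist z {x} ≤ Metric.hausdorffDist (A : Set X) {x} :=
          Metric.infDist_le_hausdorffDist_of_mem hz <|
            Metric.hausdorffEDist_ne_top_of_nonempty_of_bounded A.nonempty
              (singleton_nonempty x) A.isCompact.isBounded Bornology.isBounded_singleton
      _ < r := by rwa [Metric.hausdorffDist_comm]
  · rw [mapsTo_iff_image_subset, ← coe_hyperMap_iterate hf, hA]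

theorem stmt15_general {X : Type*} [MetricSpace X]
    (hmesh : Dense {x : X | ∃ (A : Set X) (a b : X), IsFreeArc A a b ∧ x ∈ interior A})
    {f : X → X} (hf : Continuous f)
    (hper : Dense {A : NonemptyCompacts X | IsPeriodic (hyperMap hf) A}) :
    Dense {p : X | IsPeriodic f p} := by
  refine dense_iff_inter_open.2 fun U hU hUne => ?_
  obtain ⟨y, ⟨A, a, b, hA, hyA⟩, hyU⟩ := hmesh.exists_mem_open hU hUne
  obtain ⟨c, hAc⟩ := hA.exists_circleChart
  obtain ⟨τy, hτy, rfl⟩ := hAc (interior_subset hyA)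
  obtain ⟨s, t, hs, hst, ht, hstU⟩ :=
    (hU.preimage c.continuous_param).exists_Icc_subset_of_inter_Icc_nonempty ⟨τy, hyU, hτy⟩
  obtain ⟨τ, hτ, hτper⟩ := c.exists_mem_periodicPts hf hs hst ht fun u v hsu huv hvt => by
    obtain ⟨n, hn, B, hB, hBne, hBsub, hFB⟩ :=
      exists_mapsTo_iterate_of_dense_periodic_hyperMap hf hper
        (c.isOpen_image_Ioo (hs.le.trans hsu) (hvt.trans ht.le)) ((nonempty_Ioo.2 huv).image _)
    exact ⟨n, hn, B, hB, hBne, hBsub.trans (image_mono Ioo_subset_Icc_self), hFB⟩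
  exact ⟨c.param τ, hstU hτ, hτper⟩

/-- On an almost meshed continuum, density of the periodic points of the
induced hyperspace map implies density of the periodic points of `f`. -/
theorem stmt15 {X : Type*} [MetricSpace X] [CompactSpace X] [ConnectedSpace X]
    (hmesh : Dense {x : X | ∃ (A : Set X) (a b : X), IsFreeArc A a b ∧ x ∈ interior A})
    {f : X → X} (hf : Continuous f)
    (hper : Dense {A : NonemptyCompacts X | IsPeriodic (hyperMap hf) A}) :
    Dense {p : X | IsPeriodic f p} :=
  stmt15_general hmesh hf hper
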